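/- Let w = T_{i_1}^{m_1} ⋯ T_{i_ℓ}^{m_ℓ} with i_j ≤ m_j for all j and m_1 < m_2 < ⋯ < m_ℓ (segments T_i^m = [m, m−1, …, i]). If i_r ≥ i_s for some r < s, then w is not a homogeneous word. -/

import Mathlib

/-- `a` and `b` are neighbors in the type `A` Dynkin diagram, i.e. `|a - b| = 1`. -/
def Nbr (a b : ℕ) : Prop := a + 1 = b ∨ b + 1 = a

/-- A word `w` over the alphabet `{1, …, n}` is homogeneous: whenever two equal letters
occur at positions `r < s`, there exist positions `t, u` with `r < t < u < s` whose
letters are both neighbors of the repeated letter. -/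
def Homog (w : List ℕ) : Prop :=
  ∀ r s : ℕ, r < s → s < w.length → w.getD r 0 = w.getD s 0 →
    ∃ t u : ℕ, r < t ∧ t < u ∧ u < s ∧
      Nbr (w.getD t 0) (w.getD r 0) ∧ Nbr (w.getD u 0) (w.getD r 0)

/-- The decreasing segment word `T_i^j = [j, j-1, …, i+1, i]` (empty when `i > j`). -/
def segWord (i j : ℕ) : List ℕ :=
  (List.range' i (j + 1 - i)).reverse

/-!
Some consecutive pair of segments has `i_{k+1} ≤ i_k`. Writing `a = i_k < m' = m_{k+1}`, the
factor `T_{i_k}^{m_k} T_{i_{k+1}}^{m_{k+1}}` then contains `a, m', m' - 1, …, a + 1, a`: between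
the two occurrences of `a` the only neighbour of `a` is the single letter `a + 1`. Homogeneity
passes to factors, so `w` is not homogeneous.
-/

lemma exists_apply_succ_le_apply {α : Type*} [LinearOrder α] {f : ℕ → α} {r s : ℕ}
    (hrs : r < s) (h : f s ≤ f r) : ∃ k < s, f (k + 1) ≤ f k := by
  by_contra! hf
  exact (strictMonoOn_Iic_of_lt_succ (by simpa using hf) (Set.mem_Iic.2 hrs.le)
    (Set.mem_Iic.2 le_rfl) hrs).not_ge h

namespace List

lemma pair_getElem_infix {α : Type*} (l : List α) {k : ℕ} (hk : k + 1 < l.length) :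
    [l[k], l[k + 1]] <:+: l := by
  have hpair : (l.drop k).take 2 = [l[k], l[k + 1]] := by
    rw [drop_eq_getElem_cons (Nat.lt_of_succ_lt hk), drop_eq_getElem_cons hk]
    rfl
  exact hpair ▸ (take_prefix _ _).isInfix.trans (drop_suffix _ _).isInfix

lemma getD_append_middle {α : Type*} (P w S : List α) (d : α) {i : ℕ} (hi : i < w.length) :
    (P ++ w ++ S).getD (P.length + i) d = w.getD i d := by
  rw [append_assoc, getD_append_right _ _ _ _ (by omega), Nat.add_sub_cancel_left,
    getD_append _ _ _ _ hi]

end List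

lemma Homog.of_infix {v w : List ℕ} (h : Homog w) (hvw : v <:+: w) : Homog v := by
  obtain ⟨P, S, rfl⟩ := hvw
  intro r s hrs hs heq
  have hget : ∀ i < v.length, (P ++ v ++ S).getD (P.length + i) 0 = v.getD i 0 :=
    fun i hi => List.getD_append_middle P v S 0 hi
  obtain ⟨t, u, hrt, htu, hus, ht, hu⟩ := h (P.length + r) (P.length + s) (by omega)
    (by simp; omega) (by rw [hget r (by omega), hget s hs, heq])
  refine ⟨t - P.length, u - P.length, by omega, by omega, by omega, ?_, ?_⟩
  · rwa [← hget _ (by omega), Nat.add_sub_cancel' (by omega), ← hget r (by omega)]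
  · rwa [← hget _ (by omega), Nat.add_sub_cancel' (by omega), ← hget r (by omega)]

lemma segWord_length (i m : ℕ) : (segWord i m).length = m + 1 - i := by
  simp [segWord]

lemma segWord_getD {i m k : ℕ} (hk : k ≤ m - i) (him : i ≤ m) :
    (segWord i m).getD k 0 = m - k := by
  rw [segWord, List.getD_eq_getElem _ _ (by simp; omega), List.getElem_reverse,
    List.getElem_range']
  simp only [List.length_range']
  omega

lemma singleton_suffix_segWord {i m : ℕ} (him : i ≤ m) : [i] <:+ segWord i m := by
  refine ⟨segWord (i + 1) m, ?_⟩
  rw [segWord, segWord, show m + 1 - i = (m + 1 - (i + 1)) + 1 by omega, List.range'_succ]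
  simp

lemma segWord_prefix_segWord {i k m : ℕ} (hik : i ≤ k) (hkm : k ≤ m + 1) :
    segWord k m <+: segWord i m := by
  refine ⟨(List.range' i (k - i)).reverse, ?_⟩
  rw [segWord, segWord, ← List.reverse_append, show m + 1 - i = (k - i) + (m + 1 - k) by omega,
    ← List.range'_append, one_mul, Nat.add_sub_cancel' hik]

lemma cons_segWord_infix_append {a b i m : ℕ} (hab : a ≤ b) (hia : i ≤ a) (hbm : b < m) :
    a :: segWord a m <:+: segWord a b ++ segWord i m := by
  obtain ⟨L, hL⟩ := singleton_suffix_segWord hab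
  obtain ⟨R, hR⟩ := segWord_prefix_segWord hia (by omega : a ≤ m + 1)
  exact ⟨L, R, by rw [← hL, ← hR]; simp⟩

lemma not_homog_cons_segWord {a m : ℕ} (ham : a < m) : ¬ Homog (a :: segWord a m) := by
  intro h
  have hget : ∀ k ≤ m - a, (a :: segWord a m).getD (k + 1) 0 = m - k := fun k hk => by
    simpa using segWord_getD hk ham.le
  obtain ⟨t, u, h0t, htu, hus, ht, hu⟩ := h 0 (m - a + 1) (by omega)
    (by simp [segWord_length]; omega) (by rw [hget _ le_rfl]; simp; omega)
  obtain ⟨t, rfl⟩ : ∃ t', t = t' + 1 := ⟨t - 1, by omega⟩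
  obtain ⟨u, rfl⟩ : ∃ u', u = u' + 1 := ⟨u - 1, by omega⟩
  rw [hget t (by omega)] at ht
  rw [hget u (by omega)] at hu
  simp only [List.getD_cons_zero, Nbr] at ht hu
  omega

/-- If `w = T_{i_1}^{m_1} ⋯ T_{i_ℓ}^{m_ℓ}` with `i_j ≤ m_j` and `m_1 < ⋯ < m_ℓ`, and
`i_r ≥ i_s` for some `r < s`, then `w` is not a homogeneous word. -/
theorem not_homog_of_not_increasing (ps : List (ℕ × ℕ))
    (hle : ∀ p ∈ ps, p.1 ≤ p.2)
    (hchain : List.Chain' (fun p q => p.2 < q.2) ps)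
    (r s : ℕ) (hrs : r < s) (hs : s < ps.length)
    (hge : (ps.getD s (0, 0)).1 ≤ (ps.getD r (0, 0)).1) :
    ¬ Homog ((ps.map (fun p => segWord p.1 p.2)).flatten) := by
  obtain ⟨k, hks, hdesc⟩ :=
    exists_apply_succ_le_apply (f := fun k => (ps.getD k (0, 0)).1) hrs hge
  have hk : k + 1 < ps.length := by omega
  simp only [List.getD_eq_getElem _ _ hk, List.getD_eq_getElem _ _ (Nat.lt_of_succ_lt hk)]
    at hdesc
  have hp : ps[k].1 ≤ ps[k].2 := hle _ (List.getElem_mem _)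
  have hm : ps[k].2 < ps[k + 1].2 := List.isChain_iff_getElem.mp hchain k hk
  intro h
  refine not_homog_cons_segWord (hp.trans_lt hm) (h.of_infix ?_)
  refine (cons_segWord_infix_append hp hdesc hm).trans ?_
  simpa using ((List.pair_getElem_infix ps hk).map (fun p => segWord p.1 p.2)).flatten
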